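/- For every n ≥ 1 and every puncturing set X ⊆ {0,…,2^n−1}, the incapable set U_p(X) is downward closed under binary domination: if j ∈ U_p(X) and i ⪯ j (with i < 2^n), then i ∈ U_p(X). Equivalently, for every j ∈ U_p(X), the dominated set D_j = {k < 2^n : k ⪯ j} satisfies D_j ⊆ U_p(X). -/

import Mathlib

/-- Binary domination: every binary digit of `i` is at most the corresponding digit of `j`. -/
def bdom (i j : ℕ) : Prop := ∀ t, i.testBit t = true → j.testBit t = true

instance (i j : ℕ) : Decidable (bdom i j) :=
  decidable_of_iff (i ||| j = j) (by
    constructor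
    · intro h t hi
      have h1 : (i ||| j).testBit t = j.testBit t := by rw [h]
      rw [Nat.testBit_or, hi, Bool.true_or] at h1
      exact h1.symm
    · intro h
      apply Nat.eq_of_testBit_eq
      intro t
      rw [Nat.testBit_or]
      cases hi : i.testBit t with
      | true => simp [h t hi]
      | false => simp)

/-- One step of zero-LLR propagation, computing the stage-`t` zero-LLR set from the
stage-`t+1` zero-LLR set `S`, for a polar code of length `2^n`. -/
def zstep (n t : ℕ) (S : Finset ℕ) : Finset ℕ :=
  (Finset.range (2 ^ n)).filter fun i =>
    if i.testBit t then i ∈ S ∧ i - 2 ^ t ∈ S else i ∈ S ∨ i + 2 ^ t ∈ S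

/-- Zero-LLR set at stage `t` for puncturing set `X`, for a polar code of length `2^n`:
`Zstage n X n = X` and `Zstage n X t = zstep n t (Zstage n X (t+1))` for `t < n`. -/
def Zstage (n : ℕ) (X : Finset ℕ) (t : ℕ) : Finset ℕ :=
  if _h : n ≤ t then X else zstep n t (Zstage n X (t + 1))
termination_by n - t
decreasing_by omega

/-- The incapable set resulting from puncturing set `X`. -/
def Up (n : ℕ) (X : Finset ℕ) : Finset ℕ := Zstage n X 0

/-!
Induct downwards on the stage `t`, proving more: `Z_t(X)` passes from `j` to every `i ⪯ j` that
agrees with `j` on the lowest `t` bits. At stage `t` the butterfly partner of `i` is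
`i ^^^ 2 ^ t`; when bit `t` of `i` and `j` agree, `i` and its partner are dominated by `j` and
its partner and both sides use the same rule. Otherwise bit `t` is `0` in `i` and `1` in `j`,
and `i ⪯ j ^^^ 2 ^ t`, so the `and` rule that put `j` in `Z_t` feeds the `or` rule for `i`.
At stage `n` agreement on all `n` bits forces `i = j`.
-/

namespace Nat

theorem add_two_pow_eq_xor_of_testBit_false {x t : ℕ} (h : x.testBit t = false) :
    x + 2 ^ t = x ^^^ 2 ^ t := by
  have hq : Even (x / 2 ^ t) := by
    rw [testBit_eq_decide_div_mod_eq, decide_eq_false_iff_not] at h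
    exact Nat.even_iff.mpr (by omega)
  have hr : x % 2 ^ t < 2 ^ t := Nat.mod_lt _ (Nat.two_pow_pos t)
  have hsplit : x + 2 ^ t = 2 ^ t * (x / 2 ^ t ^^^ 1) + x % 2 ^ t := by
    rw [xor_one_of_even hq, Nat.mul_add_one]
    have := Nat.div_add_mod x (2 ^ t)
    omega
  refine Nat.eq_of_testBit_eq fun s => ?_
  rw [hsplit, testBit_two_pow_mul_add _ hr, testBit_xor x, testBit_two_pow]
  split_ifs with hs
  · simp [hs.ne', hs]
  · rw [testBit_xor, testBit_div_two_pow, Nat.sub_add_cancel (by omega), ← Nat.pow_zero 2,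
      testBit_two_pow]
    congr 1
    exact decide_eq_decide.mpr (by omega)

theorem sub_two_pow_eq_xor_of_testBit_true {x t : ℕ} (h : x.testBit t = true) :
    x - 2 ^ t = x ^^^ 2 ^ t := by
  have h' : (x ^^^ 2 ^ t).testBit t = false := by simp [h]
  have := add_two_pow_eq_xor_of_testBit_false h'
  rw [Nat.xor_assoc, Nat.xor_self, xor_zero] at this
  omega

theorem testBit_xor_two_pow_of_ne {x t s : ℕ} (h : t ≠ s) :
    (x ^^^ 2 ^ t).testBit s = x.testBit s := by
  simp [testBit_two_pow_of_ne h]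

theorem eq_of_testBit_eq_of_lt_two_pow {x y n : ℕ} (hx : x < 2 ^ n) (hy : y < 2 ^ n)
    (h : ∀ s < n, x.testBit s = y.testBit s) : x = y := by
  refine Nat.eq_of_testBit_eq fun s => ?_
  rcases lt_or_ge s n with hs | hs
  · exact h s hs
  · have hpow : 2 ^ n ≤ 2 ^ s := Nat.pow_le_pow_right two_pos hs
    rw [Nat.testBit_lt_two_pow (by omega), Nat.testBit_lt_two_pow (by omega)]

end Nat

theorem mem_zstep {n t : ℕ} {S : Finset ℕ} {i : ℕ} :
    i ∈ zstep n t S ↔ i < 2 ^ n ∧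
      if i.testBit t then i ∈ S ∧ i ^^^ 2 ^ t ∈ S else i ∈ S ∨ i ^^^ 2 ^ t ∈ S := by
  unfold zstep
  cases h : i.testBit t
  · simp [h, Nat.add_two_pow_eq_xor_of_testBit_false h]
  · simp [h, Nat.sub_two_pow_eq_xor_of_testBit_true h]

theorem Zstage_of_lt {n t : ℕ} (X : Finset ℕ) (h : t < n) :
    Zstage n X t = zstep n t (Zstage n X (t + 1)) := by
  rw [Zstage, dif_neg (not_le.mpr h)]

theorem Zstage_subset_range {n t : ℕ} (X : Finset ℕ) (h : t < n) :
    Zstage n X t ⊆ Finset.range (2 ^ n) := by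
  intro i hi
  rw [Zstage_of_lt X h, mem_zstep] at hi
  exact Finset.mem_range.mpr hi.1

def BdomAbove (t i j : ℕ) : Prop := bdom i j ∧ ∀ s < t, i.testBit s = j.testBit s

namespace BdomAbove

variable {t i j : ℕ}

theorem zero (h : bdom i j) : BdomAbove 0 i j := ⟨h, fun _ hs => absurd hs (Nat.not_lt_zero _)⟩

theorem succ (h : BdomAbove t i j) (ht : i.testBit t = j.testBit t) : BdomAbove (t + 1) i j :=
  ⟨h.1, Nat.forall_lt_succ_right.mpr ⟨h.2, ht⟩⟩

theorem xor_two_pow (h : BdomAbove t i j) (ht : i.testBit t = j.testBit t) :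
    BdomAbove (t + 1) (i ^^^ 2 ^ t) (j ^^^ 2 ^ t) := by
  refine ⟨fun s hs => ?_, Nat.forall_lt_succ_right.mpr ⟨fun s hs => ?_, by simp [ht]⟩⟩
  · rcases eq_or_ne t s with rfl | hts
    · simp_all
    · rw [Nat.testBit_xor_two_pow_of_ne hts] at hs ⊢
      exact h.1 s hs
  · rw [Nat.testBit_xor_two_pow_of_ne hs.ne', Nat.testBit_xor_two_pow_of_ne hs.ne', h.2 s hs]

theorem xor_two_pow_right (h : BdomAbove t i j) (hi : i.testBit t = false)
    (hj : j.testBit t = true) : BdomAbove (t + 1) i (j ^^^ 2 ^ t) := by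
  refine ⟨fun s hs => ?_, Nat.forall_lt_succ_right.mpr ⟨fun s hs => ?_, by simp [hi, hj]⟩⟩
  · have hts : t ≠ s := by rintro rfl; simp_all
    rw [Nat.testBit_xor_two_pow_of_ne hts]
    exact h.1 s hs
  · rw [Nat.testBit_xor_two_pow_of_ne hs.ne', h.2 s hs]

theorem eq_of_le {n : ℕ} (h : BdomAbove t i j) (hj : j < 2 ^ n) (hnt : n ≤ t) : i = j :=
  Nat.eq_of_testBit_eq_of_lt_two_pow ((Nat.le_of_testBit h.1).trans_lt hj) hj
    fun s hs => h.2 s (hs.trans_le hnt)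

end BdomAbove

theorem mem_Zstage_of_bdomAbove {n : ℕ} (X : Finset ℕ) {t i j : ℕ} (hj : j < 2 ^ n)
    (h : BdomAbove t i j) (hjZ : j ∈ Zstage n X t) : i ∈ Zstage n X t := by
  rcases le_or_gt n t with hnt | htn
  · rwa [h.eq_of_le hj hnt]
  have hjx : j ^^^ 2 ^ t < 2 ^ n := Nat.xor_lt_two_pow hj (Nat.pow_lt_pow_right one_lt_two htn)
  rw [Zstage_of_lt X htn, mem_zstep] at hjZ ⊢
  refine ⟨(Nat.le_of_testBit h.1).trans_lt hj, ?_⟩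
  obtain ⟨-, hjZ⟩ := hjZ
  cases hjt : j.testBit t <;> cases hit : i.testBit t <;> simp only [hjt] at hjZ ⊢
  · have ht : i.testBit t = j.testBit t := hit.trans hjt.symm
    exact hjZ.imp (mem_Zstage_of_bdomAbove X hj (h.succ ht))
      (mem_Zstage_of_bdomAbove X hjx (h.xor_two_pow ht))
  · simpa [hjt] using h.1 t hit
  · exact Or.inl (mem_Zstage_of_bdomAbove X hjx (h.xor_two_pow_right hit hjt) hjZ.2)
  · have ht : i.testBit t = j.testBit t := hit.trans hjt.symm
    exact ⟨mem_Zstage_of_bdomAbove X hj (h.succ ht) hjZ.1,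
      mem_Zstage_of_bdomAbove X hjx (h.xor_two_pow ht) hjZ.2⟩
termination_by n - t

theorem incapable_downward_closed_general (n : ℕ) (hn : 1 ≤ n)
    (X : Finset ℕ)
    (j : ℕ) (hj : j ∈ Up n X) (i : ℕ) (hij : bdom i j) :
    i ∈ Up n X :=
  mem_Zstage_of_bdomAbove X (Finset.mem_range.mp (Zstage_subset_range X hn hj))
    (BdomAbove.zero hij) hj

/-- the incapable set is downward closed under binary domination. -/
theorem incapable_downward_closed (n : ℕ) (hn : 1 ≤ n)
    (X : Finset ℕ) (hX : X ⊆ Finset.range (2 ^ n))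
    (j : ℕ) (hj : j ∈ Up n X) (i : ℕ) (hi : i < 2 ^ n) (hij : bdom i j) :
    i ∈ Up n X :=
  incapable_downward_closed_general n hn X j hj i hij
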